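/- arXiv:math/0612488 — 2 statements merged into one kernel-verified Lean document; each statement's English description precedes it below -/
import Mathlib

section
/- Suppose ε ≤ 1/4. Then the estimator decides sides correctly: on the event {τ < ∞, S_τ ≥ U_τ} one has p̂ > α, and on the event {τ < ∞, S_τ ≤ L_τ} one has p̂ ≤ α (indeed p̂ < α). -/
/-!
Since `p̂ = S_τ / τ`, it suffices that `α N < U_N` and `L_N < α N` for every `N ≥ 1`.

By induction on `N`, the spending rule keeps `P_α(τ ≤ N, S_τ ≥ U_τ) ≤ ε_N` and
`P_α(τ ≤ N, S_τ ≤ L_τ) ≤ ε_N`; this also shows that the infimum and supremum defining the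
boundaries are attained. If `U_N ≤ α N`, the event `{S_N ≥ U_N}` is covered by
`{τ ≥ N, S_N ≥ U_N}` and the two exits before time `N`, so its probability is at most
`ε_N + ε_{N-1} < 2ε ≤ 1/2`. But `S_N` is `Bin(N, α)`, and `P(Bin(n, p) ≥ m) ≥ 1/2` whenever
`1 ≤ m ≤ n p`. The lower boundary is symmetric.

The median bound reduces, by monotonicity in `p`, to `p = x = m / n`. There the tail derivative
`h` satisfies `h u ≤ (x² / u²) h (x² / u)` on `[x, 1]`, so the substitution `u ↦ x² / u` gives
`∫_x^1 h ≤ ∫_{x²}^x h ≤ ∫_0^x h`, i.e. the upper tail at `x` is at least `1/2`.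
-/

open MeasureTheory ProbabilityTheory Filter Asymptotics
open scoped ENNReal

namespace SeqMC

variable {Ω : Type*} [MeasurableSpace Ω]

/-- Partial sums: `S n = X_1 + ⋯ + X_n`, where the i-th variable `X_i` is `X (i-1)`. -/
def S (X : ℕ → Ω → ℕ) (n : ℕ) (ω : Ω) : ℕ := ∑ i ∈ Finset.range n, X i ω

/-- `X` is an i.i.d. Bernoulli(p) sequence under the probability measure `P`. -/
structure IsBernoulliSeq (P : Measure Ω) (p : ℝ) (X : ℕ → Ω → ℕ) : Prop where
  isProb : IsProbabilityMeasure P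
  meas : ∀ i, Measurable (X i)
  bdd : ∀ i ω, X i ω ≤ 1
  indep : iIndepFun X P
  bern : ∀ i, P (X i ⁻¹' {1}) = ENNReal.ofReal p

/-- The walk stayed strictly between the boundaries at all steps `1 ≤ k ≤ n`, i.e. `τ > n`. -/
def notStopped (X : ℕ → Ω → ℕ) (U L : ℕ → ℤ) (n : ℕ) (ω : Ω) : Prop :=
  ∀ k, 1 ≤ k → k ≤ n → L k < (S X k ω : ℤ) ∧ (S X k ω : ℤ) < U k

/-- The event `τ ≤ n` and `S_τ ≥ U_τ`. -/
def hitUpperBy (X : ℕ → Ω → ℕ) (U L : ℕ → ℤ) (n : ℕ) (ω : Ω) : Prop :=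
  ∃ k, 1 ≤ k ∧ k ≤ n ∧ notStopped X U L (k - 1) ω ∧ U k ≤ (S X k ω : ℤ)

/-- The event `τ ≤ n` and `S_τ ≤ L_τ`. -/
def hitLowerBy (X : ℕ → Ω → ℕ) (U L : ℕ → ℤ) (n : ℕ) (ω : Ω) : Prop :=
  ∃ k, 1 ≤ k ∧ k ≤ n ∧ notStopped X U L (k - 1) ω ∧ (S X k ω : ℤ) ≤ L k

/-- The recursively defined boundaries `(U_n, L_n)`: `U_1 = 2`, `L_1 = -1` and for `n ≥ 2`,
`U_n` is the least `j ∈ {1,2,…}` with `P_α(τ ≥ n, S_n ≥ j) + P_α(τ < n, S_τ ≥ U_τ) ≤ ε_n`,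
`L_n` is the greatest `j ∈ ℤ` with `P_α(τ ≥ n, S_n ≤ j) + P_α(τ < n, S_τ ≤ L_τ) ≤ ε_n`.
Here `Pα` is the measure `P_α` and `εs` the spending sequence. -/
noncomputable def bnd (Pα : Measure Ω) (X : ℕ → Ω → ℕ) (εs : ℕ → ℝ) : ℕ → ℤ × ℤ
  | 0 => (2, -1)
  | 1 => (2, -1)
  | n + 2 =>
      let U : ℕ → ℤ := fun k => if h : k < n + 2 then (bnd Pα X εs k).1 else 0
      let L : ℕ → ℤ := fun k => if h : k < n + 2 then (bnd Pα X εs k).2 else 0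
      (sInf {j : ℤ | 1 ≤ j ∧
          Pα {ω | notStopped X U L (n + 1) ω ∧ j ≤ (S X (n + 2) ω : ℤ)} +
            Pα {ω | hitUpperBy X U L (n + 1) ω} ≤ ENNReal.ofReal (εs (n + 2))},
       sSup {j : ℤ |
          Pα {ω | notStopped X U L (n + 1) ω ∧ (S X (n + 2) ω : ℤ) ≤ j} +
            Pα {ω | hitLowerBy X U L (n + 1) ω} ≤ ENNReal.ofReal (εs (n + 2))})
  termination_by n => n
  decreasing_by all_goals omega

/-- The upper boundary `U_n`. -/
noncomputable def Ub (Pα : Measure Ω) (X : ℕ → Ω → ℕ) (εs : ℕ → ℝ) (n : ℕ) : ℤ :=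
  (bnd Pα X εs n).1

/-- The lower boundary `L_n`. -/
noncomputable def Lb (Pα : Measure Ω) (X : ℕ → Ω → ℕ) (εs : ℕ → ℝ) (n : ℕ) : ℤ :=
  (bnd Pα X εs n).2

/-- The stopping time `τ = inf {k ≥ 1 : S_k ≥ U_k or S_k ≤ L_k}`, with `0` encoding `τ = ∞`. -/
noncomputable def tau (Pα : Measure Ω) (X : ℕ → Ω → ℕ) (εs : ℕ → ℝ) (ω : Ω) : ℕ :=
  sInf {k | 1 ≤ k ∧ ((S X k ω : ℤ) ≤ Lb Pα X εs k ∨ Ub Pα X εs k ≤ (S X k ω : ℤ))}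

/-- `τ` as an extended nonneg real (`∞` when the algorithm never stops). -/
noncomputable def tauE (Pα : Measure Ω) (X : ℕ → Ω → ℕ) (εs : ℕ → ℝ) (ω : Ω) : ℝ≥0∞ :=
  if tau Pα X εs ω = 0 then ⊤ else (tau Pα X εs ω : ℝ≥0∞)

/-- The event `τ < ∞` and `S_τ ≥ U_τ`. -/
def hitsUpper (Pα : Measure Ω) (X : ℕ → Ω → ℕ) (εs : ℕ → ℝ) (ω : Ω) : Prop :=
  tau Pα X εs ω ≠ 0 ∧ Ub Pα X εs (tau Pα X εs ω) ≤ (S X (tau Pα X εs ω) ω : ℤ)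

/-- The event `τ < ∞` and `S_τ ≤ L_τ`. -/
def hitsLower (Pα : Measure Ω) (X : ℕ → Ω → ℕ) (εs : ℕ → ℝ) (ω : Ω) : Prop :=
  tau Pα X εs ω ≠ 0 ∧ (S X (tau Pα X εs ω) ω : ℤ) ≤ Lb Pα X εs (tau Pα X εs ω)

/-- The estimator `p̂ = S_τ/τ` (`= α` if `τ = ∞`). -/
noncomputable def phat (Pα : Measure Ω) (X : ℕ → Ω → ℕ) (εs : ℕ → ℝ) (α : ℝ) (ω : Ω) : ℝ :=
  if tau Pα X εs ω = 0 then α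
  else (S X (tau Pα X εs ω) ω : ℝ) / (tau Pα X εs ω)

noncomputable def binomTail (n m : ℕ) (p : ℝ) : ℝ :=
  ∑ k ∈ Finset.Icc m n, (n.choose k : ℝ) * p ^ k * (1 - p) ^ (n - k)

lemma hasDerivAt_binomTail {n m : ℕ} (hmn : m ≤ n) (p : ℝ) :
    HasDerivAt (binomTail n m) (m * n.choose m * p ^ (m - 1) * (1 - p) ^ (n - m)) p := by
  set A : ℕ → ℝ := fun k => k * n.choose k * p ^ (k - 1) * (1 - p) ^ (n - k) with hA
  have hterm : ∀ k ∈ Finset.Icc m n, HasDerivAt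
      (fun q : ℝ => n.choose k * q ^ k * (1 - q) ^ (n - k)) (A k - A (k + 1)) p := by
    intro k _
    have hchoose : ((k + 1 : ℕ) : ℝ) * n.choose (k + 1) = n.choose k * (n - k : ℕ) := by
      exact_mod_cast (mul_comm _ _).trans (Nat.choose_succ_right_eq n k)
    refine (((hasDerivAt_pow k p).const_mul _).mul ((hasDerivAt_pow (n - k) (1 - p)).comp p
      ((hasDerivAt_id p).const_sub 1))).congr_deriv ?_
    simp only [hA, Nat.add_sub_cancel, show n - (k + 1) = n - k - 1 by omega, Function.comp_apply]
    linear_combination p ^ k * (1 - p) ^ (n - k - 1) * hchoose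
  refine (HasDerivAt.fun_sum hterm).congr_deriv ?_
  have htop : A (n + 1) = 0 := by simp [hA]
  have htel := Finset.sum_Icc_sub hmn A
  rw [Finset.sum_sub_distrib] at htel ⊢
  change _ = A m
  linarith

lemma binomTail_zero {n m : ℕ} (hm : m ≠ 0) : binomTail n m 0 = 0 :=
  Finset.sum_eq_zero fun k hk => by
    simp [show k ≠ 0 by grind]

lemma binomTail_one {n m : ℕ} (hmn : m ≤ n) : binomTail n m 1 = 1 := by
  rw [binomTail, Finset.sum_eq_single_of_mem n (Finset.mem_Icc.2 ⟨hmn, le_rfl⟩)]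
  · simp
  · intro k hk hkn
    simp [show n - k ≠ 0 by grind]

lemma monotoneOn_binomTail {n m : ℕ} (hmn : m ≤ n) :
    MonotoneOn (binomTail n m) (Set.Icc 0 1) := by
  refine monotoneOn_of_hasDerivWithinAt_nonneg (convex_Icc 0 1)
    (fun p _ => (hasDerivAt_binomTail hmn p).continuousAt.continuousWithinAt)
    (fun p _ => (hasDerivAt_binomTail hmn p).hasDerivWithinAt) fun p hp => ?_
  rw [interior_Icc] at hp
  have : 0 ≤ 1 - p := by linarith [hp.2]
  have := hp.1.le
  positivity

lemma integral_div_sq_mul_comp_div {a b : ℝ} (ha : 0 < a) (hb : 0 < b) (c : ℝ) {g : ℝ → ℝ}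
    (hg : Continuous g) : ∫ u in a..b, c / u ^ 2 * g (c / u) = ∫ v in c / b..c / a, g v := by
  have hne : ∀ u ∈ Set.uIcc a b, u ≠ 0 := fun u hu => ((lt_min ha hb).trans_le hu.1).ne'
  have hderiv : ∀ u ∈ Set.uIcc a b, HasDerivAt (fun u => c / u) (-(c / u ^ 2)) u := fun u hu => by
    simpa [div_eq_mul_inv] using (hasDerivAt_inv (hne u hu)).const_mul c
  have hcont : ContinuousOn (fun u => -(c / u ^ 2)) (Set.uIcc a b) :=
    (continuousOn_const.div (continuousOn_pow 2) fun u hu => pow_ne_zero 2 (hne u hu)).neg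
  rw [intervalIntegral.integral_symm (c / a),
    ← intervalIntegral.integral_comp_mul_deriv hderiv hcont hg, ← intervalIntegral.integral_neg]
  congr 1 with u
  simp only [Function.comp_apply]
  ring

lemma pow_mul_one_sub_pow_le {m b : ℕ} (hm : 0 < m) {x u : ℝ} (hx : x = m / (m + b))
    (hxu : x ≤ u) (hu : u < 1) :
    u ^ (2 * m + b) * (1 - u) ^ b ≤ x ^ (2 * m) * (u - x ^ 2) ^ b := by
  have hx0 : 0 < x := by rw [hx]; positivity
  have hu0 : 0 < u := hx0.trans_le hxu
  have hsq : ∀ v, x ≤ v → 0 < v - x ^ 2 := fun v hv => by nlinarith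
  obtain ⟨n, hmn, hbn⟩ : ∃ n : ℝ, (m : ℝ) = n * x ∧ (b : ℝ) = n * (1 - x) :=
    ⟨m + b, by rw [hx]; field_simp, by rw [hx]; field_simp; ring⟩
  -- in logarithms the claim is `Φ x ≤ Φ u`, and `Φ' ≥ 0` because `m = n x`, `b = n (1 - x)`
  set Φ : ℝ → ℝ := fun w => b * Real.log (w - x ^ 2) - (2 * m + b) * Real.log w
    - b * Real.log (1 - w) with hΦ
  have hΦ' : ∀ v ∈ Set.Icc x u,
      HasDerivAt Φ ((2 * m + b) * (v - x) ^ 2 / (v * (1 - v) * (v - x ^ 2))) v := by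
    intro v hv
    have hv0 : v ≠ 0 := (hx0.trans_le hv.1).ne'
    have hv1 : 1 - v ≠ 0 := by linarith [hv.2]
    have hvx : v - x ^ 2 ≠ 0 := (hsq v hv.1).ne'
    refine ((((Real.hasDerivAt_log hvx).comp v ((hasDerivAt_id v).sub_const _)).const_mul _).sub
      ((Real.hasDerivAt_log hv0).const_mul _) |>.sub
      (((Real.hasDerivAt_log hv1).comp v ((hasDerivAt_id v).const_sub 1)).const_mul _))
      |>.congr_deriv ?_
    rw [hmn, hbn]
    field_simp
    ring
  have hΦmono : MonotoneOn Φ (Set.Icc x u) := by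
    refine monotoneOn_of_hasDerivWithinAt_nonneg (convex_Icc x u)
      (fun v hv => (hΦ' v hv).continuousAt.continuousWithinAt)
      (fun v hv => (hΦ' v (interior_subset hv)).hasDerivWithinAt) fun v hv => ?_
    have hv := interior_subset hv
    have := hsq v hv.1
    have : 0 < 1 - v := by linarith [hv.2]
    have := hx0.trans_le hv.1
    positivity
  have hΦxu := hΦmono (Set.left_mem_Icc.2 hxu) (Set.right_mem_Icc.2 hxu) hxu
  have hxx : Real.log (x - x ^ 2) = Real.log x + Real.log (1 - x) := by
    rw [← Real.log_mul hx0.ne' (by linarith)]; ring_nf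
  have : 0 < 1 - u := by linarith
  have := hsq u hxu
  rw [← Real.log_le_log_iff (by positivity) (by positivity), Real.log_mul (by positivity)
    (by positivity), Real.log_mul (by positivity) (by positivity), Real.log_pow, Real.log_pow,
    Real.log_pow, Real.log_pow]
  simp only [hΦ, hxx] at hΦxu
  push_cast
  linarith

lemma pow_mul_one_sub_pow_le_div_sq_mul {m b : ℕ} (hm : 0 < m) (hb : 0 < b) {x u : ℝ}
    (hx : x = m / (m + b)) (hxu : x ≤ u) (hu : u ≤ 1) :
    u ^ (m - 1) * (1 - u) ^ b ≤ x ^ 2 / u ^ 2 * ((x ^ 2 / u) ^ (m - 1) * (1 - x ^ 2 / u) ^ b) := by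
  have hx0 : 0 < x := by rw [hx]; positivity
  have hu0 : 0 < u := hx0.trans_le hxu
  have hxu' : x ^ 2 / u ≤ 1 := by
    rw [div_le_one hu0]; nlinarith
  rcases hu.lt_or_eq with hu1 | rfl
  · obtain ⟨k, rfl⟩ : ∃ k, m = k + 1 := ⟨m - 1, by omega⟩
    have key := pow_mul_one_sub_pow_le hm hx hxu hu1
    rw [Nat.add_sub_cancel, div_pow, one_sub_div hu0.ne', div_pow, div_mul_div_comm,
      div_mul_div_comm, le_div_iff₀ (by positivity)]
    calc u ^ k * (1 - u) ^ b * (u ^ 2 * (u ^ k * u ^ b))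
        = u ^ (2 * (k + 1) + b) * (1 - u) ^ b := by ring
      _ ≤ x ^ (2 * (k + 1)) * (u - x ^ 2) ^ b := key
      _ = x ^ 2 * ((x ^ 2) ^ k * (u - x ^ 2) ^ b) := by ring
  · have : 0 ≤ 1 - x ^ 2 := by simpa using hxu'
    simp only [sub_self, zero_pow hb.ne', mul_zero, div_one]
    positivity

lemma half_le_binomTail_div {m b : ℕ} (hm : 0 < m) (hb : 0 < b) :
    1 / 2 ≤ binomTail (m + b) m (m / (m + b)) := by
  set x : ℝ := m / (m + b) with hx
  have hx0 : 0 < x := by positivity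
  have hx1 : x < 1 := by
    rw [hx, div_lt_one (by positivity)]
    exact_mod_cast Nat.lt_add_of_pos_right hb
  set C : ℝ := m * (m + b).choose m
  set h : ℝ → ℝ := fun t => C * (t ^ (m - 1) * (1 - t) ^ b)
  have hD : ∀ t, HasDerivAt (binomTail (m + b) m) (h t) t := fun t =>
    (hasDerivAt_binomTail (Nat.le_add_right m b) t).congr_deriv
      (by rw [Nat.add_sub_cancel_left]; ring)
  have hcont : Continuous h := by fun_prop
  have hFx : ∫ t in (0 : ℝ)..x, h t = binomTail (m + b) m x := by
    rw [intervalIntegral.integral_eq_sub_of_hasDerivAt (fun t _ => hD t)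
      (hcont.intervalIntegrable _ _), binomTail_zero hm.ne', sub_zero]
  have hGx : ∫ t in x..1, h t = 1 - binomTail (m + b) m x := by
    rw [intervalIntegral.integral_eq_sub_of_hasDerivAt (fun t _ => hD t)
      (hcont.intervalIntegrable _ _), binomTail_one (Nat.le_add_right m b)]
  have hinv : ∫ u in x..1, h u ≤ ∫ v in x ^ 2..x, h v := by
    have hsub := integral_div_sq_mul_comp_div hx0 one_pos (x ^ 2) hcont
    rw [div_one, sq, mul_div_assoc, div_self hx0.ne', mul_one, ← sq] at hsub
    rw [← hsub]
    refine intervalIntegral.integral_mono_on hx1.le (hcont.intervalIntegrable _ _) ?_ fun u hu => ?_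
    · have hne : ∀ u ∈ Set.Icc x 1, u ≠ 0 := fun u hu => (hx0.trans_le hu.1).ne'
      refine ContinuousOn.intervalIntegrable_of_Icc hx1.le ?_
      exact (continuousOn_const.div (continuousOn_pow 2) fun u hu => pow_ne_zero 2 (hne u hu)).mul
        (hcont.comp_continuousOn (continuousOn_const.div continuousOn_id hne))
    · calc h u ≤ C * (x ^ 2 / u ^ 2 * ((x ^ 2 / u) ^ (m - 1) * (1 - x ^ 2 / u) ^ b)) :=
            mul_le_mul_of_nonneg_left (pow_mul_one_sub_pow_le_div_sq_mul hm hb hx hu.1 hu.2)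
              (by positivity)
        _ = x ^ 2 / u ^ 2 * h (x ^ 2 / u) := by ring
  have hlow : 0 ≤ ∫ t in (0 : ℝ)..x ^ 2, h t := by
    refine intervalIntegral.integral_nonneg (by positivity) fun t ht => ?_
    have : 0 ≤ 1 - t := by nlinarith [ht.2]
    have := ht.1
    positivity
  rw [← intervalIntegral.integral_add_adjacent_intervals (hcont.intervalIntegrable 0 (x ^ 2))
    (hcont.intervalIntegrable _ x)] at hFx
  linarith

lemma half_le_binomTail {n m : ℕ} {p : ℝ} (hm : 0 < m) (hp : p ≤ 1) (hmp : (m : ℝ) ≤ n * p) :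
    1 / 2 ≤ binomTail n m p := by
  have hmn : m ≤ n := by
    exact_mod_cast hmp.trans (mul_le_of_le_one_right (Nat.cast_nonneg n) hp)
  have hp0 : 0 ≤ p := by
    by_contra! hneg
    have : (n : ℝ) * p ≤ 0 := mul_nonpos_of_nonneg_of_nonpos (Nat.cast_nonneg n) hneg.le
    have : (0 : ℝ) < m := by exact_mod_cast hm
    linarith
  obtain ⟨b, rfl⟩ := Nat.exists_eq_add_of_le hmn
  rcases b.eq_zero_or_pos with rfl | hb
  · have hp1 : p = 1 := by
      have : (0 : ℝ) < m := by exact_mod_cast hm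
      push_cast at hmp
      nlinarith
    rw [hp1, add_zero, binomTail_one le_rfl]
    norm_num
  · have hxp : (m : ℝ) / (m + b) ≤ p := by
      rw [div_le_iff₀ (by positivity)]
      push_cast at hmp
      linarith
    exact (half_le_binomTail_div hm hb).trans <| monotoneOn_binomTail (Nat.le_add_right m b)
      ⟨by positivity, hxp.trans hp⟩ ⟨hp0, hp⟩ hxp

lemma sum_range_binomial_eq_binomTail {n K : ℕ} (hK : K ≤ n) (p : ℝ) :
    ∑ k ∈ Finset.range (K + 1), (n.choose k : ℝ) * p ^ k * (1 - p) ^ (n - k) =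
      binomTail n (n - K) (1 - p) := by
  refine Finset.sum_nbij' (fun k => n - k) (fun k => n - k) ?_ ?_ ?_ ?_ fun k hk => ?_
  any_goals intro k hk; simp only [Finset.mem_range, Finset.mem_Icc] at hk ⊢; omega
  rw [Finset.mem_range] at hk
  rw [Nat.choose_symm (by omega), sub_sub_cancel, Nat.sub_sub_self (by omega)]
  ring

section BernoulliSums

variable {P : Measure Ω} {p : ℝ} {X : ℕ → Ω → ℕ}

omit [MeasurableSpace Ω] in
lemma S_le (hX : ∀ i ω, X i ω ≤ 1) (n : ℕ) (ω : Ω) : S X n ω ≤ n :=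
  (Finset.sum_le_sum fun i _ => hX i ω).trans (by simp)

lemma measurable_S (hX : ∀ i, Measurable (X i)) (n : ℕ) : Measurable (S X n) :=
  Finset.measurable_sum _ fun i _ => hX i

def cylinder (X : ℕ → Ω → ℕ) (n : ℕ) (s : Finset ℕ) : Set Ω :=
  ⋂ i ∈ Finset.range n, X i ⁻¹' {if i ∈ s then 1 else 0}

omit [MeasurableSpace Ω] in
lemma mem_cylinder {n : ℕ} {s : Finset ℕ} {ω : Ω} :
    ω ∈ cylinder X n s ↔ ∀ i ∈ Finset.range n, X i ω = if i ∈ s then 1 else 0 := by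
  simp [cylinder]

omit [MeasurableSpace Ω] in
lemma eq_of_mem_cylinder {n : ℕ} {s t : Finset ℕ} {ω : Ω} (hs : s ⊆ Finset.range n)
    (ht : t ⊆ Finset.range n) (hωs : ω ∈ cylinder X n s) (hωt : ω ∈ cylinder X n t) : s = t := by
  rw [mem_cylinder] at hωs hωt
  ext i
  by_cases hi : i ∈ Finset.range n
  · have := (hωs i hi).symm.trans (hωt i hi)
    split_ifs at this <;> simp_all
  · exact iff_of_false (fun h => hi (hs h)) fun h => hi (ht h)

omit [MeasurableSpace Ω] in
lemma S_eq_card_of_mem_cylinder {n : ℕ} {s : Finset ℕ} {ω : Ω} (hs : s ⊆ Finset.range n)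
    (hω : ω ∈ cylinder X n s) : S X n ω = s.card := by
  rw [S, Finset.sum_congr rfl (mem_cylinder.1 hω), Finset.sum_boole, Finset.filter_mem_eq_inter,
    Finset.inter_eq_right.2 hs, Nat.cast_id]

lemma IsBernoulliSeq.measure_preimage_zero (hB : IsBernoulliSeq P p X) (hp : 0 ≤ p) (i : ℕ) :
    P (X i ⁻¹' {0}) = ENNReal.ofReal (1 - p) := by
  have := hB.isProb
  have hcompl : X i ⁻¹' {0} = (X i ⁻¹' {1})ᶜ := by
    ext ω
    have := hB.bdd i ω
    simp only [Set.mem_preimage, Set.mem_singleton_iff, Set.mem_compl_iff]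
    omega
  rw [hcompl, prob_compl_eq_one_sub (hB.meas i (measurableSet_singleton 1)), hB.bern i,
    ENNReal.ofReal_sub 1 hp, ENNReal.ofReal_one]

lemma IsBernoulliSeq.measure_cylinder (hB : IsBernoulliSeq P p X) (hp : 0 ≤ p) {n : ℕ}
    {s : Finset ℕ} (hs : s ⊆ Finset.range n) :
    P (cylinder X n s) = ENNReal.ofReal p ^ s.card * ENNReal.ofReal (1 - p) ^ (n - s.card) := by
  rw [cylinder, hB.indep.measure_inter_preimage_eq_mul _ fun i _ => measurableSet_singleton _]
  have hfactor : ∀ i ∈ Finset.range n, P (X i ⁻¹' {if i ∈ s then 1 else 0}) =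
      if i ∈ s then ENNReal.ofReal p else ENNReal.ofReal (1 - p) := fun i _ => by
    split_ifs
    exacts [hB.bern i, hB.measure_preimage_zero hp i]
  have hin : (Finset.range n).filter (· ∈ s) = s := by
    rw [Finset.filter_mem_eq_inter, Finset.inter_eq_right.2 hs]
  have hout : ((Finset.range n).filter (· ∉ s)).card = n - s.card := by
    have := Finset.card_filter_add_card_filter_not (s := Finset.range n) (· ∈ s)
    rw [hin, Finset.card_range] at this
    omega
  rw [Finset.prod_congr rfl hfactor, Finset.prod_ite, Finset.prod_const, Finset.prod_const, hin,
    hout]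

lemma IsBernoulliSeq.ofReal_binomial_le_measure_S_eq (hB : IsBernoulliSeq P p X) (hp0 : 0 ≤ p)
    (hp1 : p ≤ 1) (n k : ℕ) :
    ENNReal.ofReal (n.choose k * p ^ k * (1 - p) ^ (n - k)) ≤ P (S X n ⁻¹' {k}) := by
  have hdisj : (Finset.powersetCard k (Finset.range n) : Set (Finset ℕ)).PairwiseDisjoint
      (cylinder X n) := fun s hs t ht hst => Set.disjoint_left.2 fun ω hωs hωt =>
    hst (eq_of_mem_cylinder (Finset.mem_powersetCard.1 hs).1 (Finset.mem_powersetCard.1 ht).1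
      hωs hωt)
  have hsub : ⋃ s ∈ Finset.powersetCard k (Finset.range n), cylinder X n s ⊆ S X n ⁻¹' {k} := by
    simp only [Set.iUnion_subset_iff, Finset.mem_powersetCard]
    intro s hs ω hω
    rw [Set.mem_preimage, S_eq_card_of_mem_cylinder hs.1 hω, hs.2, Set.mem_singleton_iff]
  calc ENNReal.ofReal (n.choose k * p ^ k * (1 - p) ^ (n - k))
      = ∑ s ∈ Finset.powersetCard k (Finset.range n), P (cylinder X n s) := by
        rw [Finset.sum_congr rfl fun s hs => by
          rw [hB.measure_cylinder hp0 (Finset.mem_powersetCard.1 hs).1,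
            (Finset.mem_powersetCard.1 hs).2], Finset.sum_const, Finset.card_powersetCard,
          Finset.card_range, nsmul_eq_mul, ENNReal.ofReal_mul (by positivity),
          ENNReal.ofReal_mul (by positivity), ENNReal.ofReal_pow hp0,
          ENNReal.ofReal_pow (sub_nonneg.2 hp1), ENNReal.ofReal_natCast, mul_assoc]
    _ = P (⋃ s ∈ Finset.powersetCard k (Finset.range n), cylinder X n s) :=
        (measure_biUnion_finset hdisj fun s _ => MeasurableSet.biInter
          (Finset.range n).countable_toSet fun i _ => hB.meas i (measurableSet_singleton _)).symm
    _ ≤ P (S X n ⁻¹' {k}) := measure_mono hsub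

lemma IsBernoulliSeq.ofReal_sum_binomial_le_measure_S_mem (hB : IsBernoulliSeq P p X)
    (hp0 : 0 ≤ p) (hp1 : p ≤ 1) (n : ℕ) (s : Finset ℕ) :
    ENNReal.ofReal (∑ k ∈ s, n.choose k * p ^ k * (1 - p) ^ (n - k)) ≤ P (S X n ⁻¹' s) := by
  rw [ENNReal.ofReal_sum_of_nonneg fun k _ => by have := sub_nonneg.2 hp1; positivity,
    ← sum_measure_preimage_singleton s fun k _ =>
      measurable_S hB.meas n (measurableSet_singleton k)]
  exact Finset.sum_le_sum fun k _ => hB.ofReal_binomial_le_measure_S_eq hp0 hp1 n k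

lemma IsBernoulliSeq.half_le_measure_le_S (hB : IsBernoulliSeq P p X) (hp0 : 0 ≤ p)
    (hp1 : p ≤ 1) {n : ℕ} {j : ℤ} (hj : 1 ≤ j) (hjp : (j : ℝ) ≤ n * p) :
    ENNReal.ofReal (1 / 2) ≤ P {ω | j ≤ (S X n ω : ℤ)} := by
  lift j to ℕ using by omega
  calc ENNReal.ofReal (1 / 2) ≤ ENNReal.ofReal (binomTail n j p) :=
        ENNReal.ofReal_le_ofReal (half_le_binomTail (by omega) hp1 (by exact_mod_cast hjp))
    _ ≤ P (S X n ⁻¹' Finset.Icc j n) := hB.ofReal_sum_binomial_le_measure_S_mem hp0 hp1 n _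
    _ ≤ P {ω | (j : ℤ) ≤ (S X n ω : ℤ)} := measure_mono fun ω hω => by
        simpa using (Finset.mem_Icc.1 hω).1

lemma IsBernoulliSeq.half_le_measure_S_le (hB : IsBernoulliSeq P p X) (hp0 : 0 ≤ p)
    (hp1 : p ≤ 1) {n : ℕ} {j : ℤ} (hj : 0 ≤ j) (hjp : n * p ≤ (j : ℝ)) :
    ENNReal.ofReal (1 / 2) ≤ P {ω | (S X n ω : ℤ) ≤ j} := by
  have := hB.isProb
  lift j to ℕ using hj
  rcases lt_or_ge j n with hjn | hjn
  · calc ENNReal.ofReal (1 / 2) ≤ ENNReal.ofReal (binomTail n (n - j) (1 - p)) := by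
          refine ENNReal.ofReal_le_ofReal (half_le_binomTail (by omega) (by linarith) ?_)
          rw [Nat.cast_sub hjn.le]
          push_cast at hjp
          linarith
      _ = ENNReal.ofReal (∑ k ∈ Finset.range (j + 1), n.choose k * p ^ k * (1 - p) ^ (n - k)) :=
          by rw [sum_range_binomial_eq_binomTail hjn.le]
      _ ≤ P (S X n ⁻¹' Finset.range (j + 1)) := hB.ofReal_sum_binomial_le_measure_S_mem hp0 hp1 n _
      _ ≤ P {ω | (S X n ω : ℤ) ≤ j} := measure_mono fun ω hω => by
          simpa [Nat.lt_succ_iff] using hω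
  · have hall : {ω | (S X n ω : ℤ) ≤ j} = Set.univ :=
      Set.eq_univ_of_forall fun ω => by simpa using (S_le hB.bdd n ω).trans hjn
    rw [hall, measure_univ]
    exact ENNReal.ofReal_le_one.2 (by norm_num)

end BernoulliSums

section Stopping

omit [MeasurableSpace Ω]

lemma notStopped_or_hitUpperBy_or_hitLowerBy (X : ℕ → Ω → ℕ) (U L : ℕ → ℤ) (N : ℕ) (ω : Ω) :
    notStopped X U L N ω ∨ hitUpperBy X U L N ω ∨ hitLowerBy X U L N ω := by
  induction N with
  | zero => exact Or.inl fun k _ hk => absurd hk (by omega)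
  | succ N ih =>
    rcases ih with hrun | ⟨k, h1, h2, h3, h4⟩ | ⟨k, h1, h2, h3, h4⟩
    · by_cases hup : U (N + 1) ≤ S X (N + 1) ω
      · exact Or.inr (Or.inl ⟨N + 1, by omega, le_rfl, hrun, hup⟩)
      by_cases hlow : (S X (N + 1) ω : ℤ) ≤ L (N + 1)
      · exact Or.inr (Or.inr ⟨N + 1, by omega, le_rfl, hrun, hlow⟩)
      refine Or.inl fun k h1 h2 => ?_
      rcases h2.lt_or_eq with h2 | rfl
      exacts [hrun k h1 (by omega), ⟨by omega, by omega⟩]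
    · exact Or.inr (Or.inl ⟨k, h1, by omega, h3, h4⟩)
    · exact Or.inr (Or.inr ⟨k, h1, by omega, h3, h4⟩)

variable {X : ℕ → Ω → ℕ} {U U' L L' : ℕ → ℤ} {N : ℕ} {ω : Ω}

lemma notStopped_congr (hU : ∀ k ≤ N, U k = U' k) (hL : ∀ k ≤ N, L k = L' k) :
    notStopped X U L N ω ↔ notStopped X U' L' N ω :=
  forall_congr' fun k => imp_congr_right fun _ => forall_congr' fun hk => by rw [hU k hk, hL k hk]

lemma hitUpperBy_congr (hU : ∀ k ≤ N, U k = U' k) (hL : ∀ k ≤ N, L k = L' k) :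
    hitUpperBy X U L N ω ↔ hitUpperBy X U' L' N ω :=
  exists_congr fun k => and_congr_right fun _ => and_congr_right fun hk => and_congr
    (notStopped_congr (fun i hi => hU i (by omega)) fun i hi => hL i (by omega)) (by rw [hU k hk])

lemma hitLowerBy_congr (hU : ∀ k ≤ N, U k = U' k) (hL : ∀ k ≤ N, L k = L' k) :
    hitLowerBy X U L N ω ↔ hitLowerBy X U' L' N ω :=
  exists_congr fun k => and_congr_right fun _ => and_congr_right fun hk => and_congr
    (notStopped_congr (fun i hi => hU i (by omega)) fun i hi => hL i (by omega)) (by rw [hL k hk])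

lemma hitUpperBy_succ (h : hitUpperBy X U L (N + 1) ω) :
    (notStopped X U L N ω ∧ U (N + 1) ≤ S X (N + 1) ω) ∨ hitUpperBy X U L N ω := by
  obtain ⟨k, h1, h2, h3, h4⟩ := h
  rcases h2.lt_or_eq with h2 | rfl
  exacts [Or.inr ⟨k, h1, by omega, h3, h4⟩, Or.inl ⟨h3, h4⟩]

lemma hitLowerBy_succ (h : hitLowerBy X U L (N + 1) ω) :
    (notStopped X U L N ω ∧ (S X (N + 1) ω : ℤ) ≤ L (N + 1)) ∨ hitLowerBy X U L N ω := by
  obtain ⟨k, h1, h2, h3, h4⟩ := h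
  rcases h2.lt_or_eq with h2 | rfl
  exacts [Or.inr ⟨k, h1, by omega, h3, h4⟩, Or.inl ⟨h3, h4⟩]

end Stopping

section Boundaries

variable (Pα : Measure Ω) (X : ℕ → Ω → ℕ) (εs : ℕ → ℝ)

def stillRunning (N : ℕ) : Set Ω := {ω | notStopped X (Ub Pα X εs) (Lb Pα X εs) N ω}

def upperExit (N : ℕ) : Set Ω := {ω | hitUpperBy X (Ub Pα X εs) (Lb Pα X εs) N ω}

def lowerExit (N : ℕ) : Set Ω := {ω | hitLowerBy X (Ub Pα X εs) (Lb Pα X εs) N ω}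

/-- Admissible values of `U (n + 2)`. -/
def upperAdmissible (n : ℕ) : Set ℤ :=
  {j | 1 ≤ j ∧ Pα (stillRunning Pα X εs (n + 1) ∩ {ω | j ≤ S X (n + 2) ω}) +
    Pα (upperExit Pα X εs (n + 1)) ≤ ENNReal.ofReal (εs (n + 2))}

/-- Admissible values of `L (n + 2)`. -/
def lowerAdmissible (n : ℕ) : Set ℤ :=
  {j | Pα (stillRunning Pα X εs (n + 1) ∩ {ω | (S X (n + 2) ω : ℤ) ≤ j}) +
    Pα (lowerExit Pα X εs (n + 1)) ≤ ENNReal.ofReal (εs (n + 2))}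

lemma bnd_add_two (n : ℕ) : bnd Pα X εs (n + 2) =
    (sInf (upperAdmissible Pα X εs n), sSup (lowerAdmissible Pα X εs n)) := by
  have hU : ∀ k ≤ n + 1, (if _ : k < n + 2 then (bnd Pα X εs k).1 else 0) = Ub Pα X εs k :=
    fun k hk => dif_pos (by omega)
  have hL : ∀ k ≤ n + 1, (if _ : k < n + 2 then (bnd Pα X εs k).2 else 0) = Lb Pα X εs k :=
    fun k hk => dif_pos (by omega)
  rw [bnd]
  simp only [notStopped_congr hU hL, hitUpperBy_congr hU hL, hitLowerBy_congr hU hL]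
  rfl

lemma Ub_one : Ub Pα X εs 1 = 2 := by rw [Ub, bnd]

lemma Lb_one : Lb Pα X εs 1 = -1 := by rw [Lb, bnd]

variable {Pα X εs}

lemma upperExit_one (hX : ∀ i ω, X i ω ≤ 1) : upperExit Pα X εs 1 = ∅ :=
  Set.eq_empty_of_forall_notMem fun ω ⟨k, h1, h2, _, h4⟩ => by
    obtain rfl : k = 1 := by omega
    have := S_le hX 1 ω
    rw [Ub_one] at h4
    omega

lemma lowerExit_one : lowerExit Pα X εs 1 = ∅ :=
  Set.eq_empty_of_forall_notMem fun ω ⟨k, h1, h2, _, h4⟩ => by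
    obtain rfl : k = 1 := by omega
    rw [Lb_one] at h4
    omega

lemma upperExit_succ_subset (N : ℕ) : upperExit Pα X εs (N + 1) ⊆
    stillRunning Pα X εs N ∩ {ω | Ub Pα X εs (N + 1) ≤ S X (N + 1) ω} ∪ upperExit Pα X εs N :=
  fun _ h => hitUpperBy_succ h

lemma lowerExit_succ_subset (N : ℕ) : lowerExit Pα X εs (N + 1) ⊆
    stillRunning Pα X εs N ∩ {ω | (S X (N + 1) ω : ℤ) ≤ Lb Pα X εs (N + 1)} ∪
      lowerExit Pα X εs N :=
  fun _ h => hitLowerBy_succ h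

lemma measure_le_stillRunning_inter_add_exits (E : Set Ω) (N : ℕ) :
    Pα E ≤ Pα (stillRunning Pα X εs N ∩ E) + Pα (upperExit Pα X εs N) +
      Pα (lowerExit Pα X εs N) := by
  refine (measure_mono fun ω hω => ?_).trans
    ((measure_union_le _ _).trans (add_le_add (measure_union_le _ _) le_rfl))
  rcases notStopped_or_hitUpperBy_or_hitLowerBy X (Ub Pα X εs) (Lb Pα X εs) N ω with h | h | h
  exacts [Or.inl (Or.inl ⟨h, hω⟩), Or.inl (Or.inr h), Or.inr h]

end Boundaries

lemma ofReal_add_ofReal_lt {a b c d : ℝ} (hc : 0 < c) (ha : a < c) (hb : b < c)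
    (hcd : 2 * c ≤ d) : ENNReal.ofReal a + ENNReal.ofReal b < ENNReal.ofReal d :=
  calc ENNReal.ofReal a + ENNReal.ofReal b < ENNReal.ofReal c + ENNReal.ofReal c :=
        ENNReal.add_lt_add ((ENNReal.ofReal_lt_ofReal_iff hc).2 ha)
          ((ENNReal.ofReal_lt_ofReal_iff hc).2 hb)
    _ = ENNReal.ofReal (2 * c) := by rw [two_mul, ENNReal.ofReal_add hc.le hc.le]
    _ ≤ ENNReal.ofReal d := ENNReal.ofReal_le_ofReal hcd

section SpendingBounds

variable {Pα : Measure Ω} {X : ℕ → Ω → ℕ} {εs : ℕ → ℝ} {n : ℕ}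

lemma Ub_add_two_mem (hX : ∀ i ω, X i ω ≤ 1) (hmono : Monotone εs)
    (hprev : Pα (upperExit Pα X εs (n + 1)) ≤ ENNReal.ofReal (εs (n + 1))) :
    Ub Pα X εs (n + 2) ∈ upperAdmissible Pα X εs n := by
  rw [Ub, bnd_add_two]
  refine Int.csInf_mem ⟨n + 3, by omega, ?_⟩ ⟨1, fun j hj => hj.1⟩
  have hempty : stillRunning Pα X εs (n + 1) ∩ {ω | (n + 3 : ℤ) ≤ S X (n + 2) ω} = ∅ :=
    Set.eq_empty_of_forall_notMem fun ω ⟨_, h⟩ => by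
      have := S_le hX (n + 2) ω
      simp only [Set.mem_ofPred_eq] at h
      omega
  rw [hempty, measure_empty, zero_add]
  exact hprev.trans (ENNReal.ofReal_le_ofReal (hmono (Nat.le_succ _)))

lemma Lb_add_two_mem [IsProbabilityMeasure Pα] (hX : ∀ i ω, X i ω ≤ 1) (hmono : Monotone εs)
    (hsmall : ∀ n, εs n < 1 / 2)
    (hprevU : Pα (upperExit Pα X εs (n + 1)) ≤ ENNReal.ofReal (εs (n + 1)))
    (hprevL : Pα (lowerExit Pα X εs (n + 1)) ≤ ENNReal.ofReal (εs (n + 1))) :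
    Lb Pα X εs (n + 2) ∈ lowerAdmissible Pα X εs n := by
  rw [Lb, bnd_add_two]
  refine Int.csSup_mem ⟨-1, ?_⟩ ⟨n + 2, fun j hj => ?_⟩
  · have hempty : stillRunning Pα X εs (n + 1) ∩ {ω | (S X (n + 2) ω : ℤ) ≤ -1} = ∅ :=
      Set.eq_empty_of_forall_notMem fun ω ⟨_, h⟩ => by
        simp only [Set.mem_ofPred_eq] at h
        omega
    rw [lowerAdmissible, Set.mem_ofPred_eq, hempty, measure_empty, zero_add]
    exact hprevL.trans (ENNReal.ofReal_le_ofReal (hmono (Nat.le_succ _)))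
  -- a larger `j` would make `{S ≤ j}` everything, so the spent error would reach `1`
  by_contra! hj'
  have hall : {ω | (S X (n + 2) ω : ℤ) ≤ j} = Set.univ :=
    Set.eq_univ_of_forall fun ω => by
      have := S_le hX (n + 2) ω
      simp only [Set.mem_ofPred_eq]
      omega
  have hcover := measure_le_stillRunning_inter_add_exits (Pα := Pα) (X := X) (εs := εs)
    {ω | (S X (n + 2) ω : ℤ) ≤ j} (n + 1)
  rw [add_right_comm, hall, measure_univ, ← hall] at hcover
  have hlt := ofReal_add_ofReal_lt one_half_pos (hsmall (n + 2)) (hsmall (n + 1))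
    (show 2 * (1 / 2 : ℝ) ≤ 1 by norm_num)
  rw [ENNReal.ofReal_one] at hlt
  exact (hcover.trans (add_le_add hj hprevU)).not_gt hlt

lemma measure_exits_le [IsProbabilityMeasure Pα] (hX : ∀ i ω, X i ω ≤ 1) (hmono : Monotone εs)
    (hsmall : ∀ n, εs n < 1 / 2) (n : ℕ) :
    Pα (upperExit Pα X εs (n + 1)) ≤ ENNReal.ofReal (εs (n + 1)) ∧
      Pα (lowerExit Pα X εs (n + 1)) ≤ ENNReal.ofReal (εs (n + 1)) := by
  induction n with
  | zero => simp [upperExit_one hX, lowerExit_one]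
  | succ n ih =>
    exact ⟨(measure_mono (upperExit_succ_subset _)).trans <| (measure_union_le _ _).trans
        (Ub_add_two_mem hX hmono ih.1).2,
      (measure_mono (lowerExit_succ_subset _)).trans <| (measure_union_le _ _).trans
        (Lb_add_two_mem hX hmono hsmall ih.1 ih.2)⟩

end SpendingBounds

section Separation

variable {Pα : Measure Ω} {X : ℕ → Ω → ℕ} {εs : ℕ → ℝ} {α : ℝ}

lemma mul_lt_Ub (hB : IsBernoulliSeq Pα α X) (hα0 : 0 ≤ α) (hα1 : α ≤ 1) (hmono : Monotone εs)
    (hsmall : ∀ n, εs n < 1 / 4) : ∀ {N : ℕ}, 1 ≤ N → α * N < Ub Pα X εs N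
  | 1, _ => by rw [Ub_one]; push_cast; linarith
  | n + 2, _ => by
    have := hB.isProb
    by_contra! hle
    have hprev := measure_exits_le (Pα := Pα) (εs := εs) hB.bdd hmono
      (fun n => (hsmall n).trans (by norm_num)) n
    have hmem := Ub_add_two_mem hB.bdd hmono hprev.1
    have hmedian := hB.half_le_measure_le_S hα0 hα1 hmem.1 (by rw [mul_comm]; exact_mod_cast hle)
    have hcover := measure_le_stillRunning_inter_add_exits (Pα := Pα) (X := X) (εs := εs)
      {ω | Ub Pα X εs (n + 2) ≤ S X (n + 2) ω} (n + 1)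
    have hlt := ofReal_add_ofReal_lt (by norm_num) (hsmall (n + 2)) (hsmall (n + 1))
      (show 2 * (1 / 4 : ℝ) ≤ 1 / 2 by norm_num)
    exact (hmedian.trans (hcover.trans (add_le_add hmem.2 hprev.2))).not_gt hlt

lemma Lb_lt_mul (hB : IsBernoulliSeq Pα α X) (hα0 : 0 ≤ α) (hα1 : α ≤ 1) (hmono : Monotone εs)
    (hsmall : ∀ n, εs n < 1 / 4) : ∀ {N : ℕ}, 1 ≤ N → (Lb Pα X εs N : ℝ) < α * N
  | 1, _ => by rw [Lb_one]; push_cast; linarith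
  | n + 2, _ => by
    have := hB.isProb
    have hhalf : ∀ n, εs n < 1 / 2 := fun n => (hsmall n).trans (by norm_num)
    by_contra! hle
    have hprev := measure_exits_le (Pα := Pα) (εs := εs) hB.bdd hmono hhalf n
    have hmem := Lb_add_two_mem hB.bdd hmono hhalf hprev.1 hprev.2
    have hL0 : 0 ≤ Lb Pα X εs (n + 2) := by
      have : (0 : ℝ) ≤ α * (n + 2 : ℕ) := by positivity
      exact_mod_cast this.trans hle
    have hmedian := hB.half_le_measure_S_le hα0 hα1 hL0 (by rw [mul_comm]; exact_mod_cast hle)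
    have hcover := measure_le_stillRunning_inter_add_exits (Pα := Pα) (X := X) (εs := εs)
      {ω | (S X (n + 2) ω : ℤ) ≤ Lb Pα X εs (n + 2)} (n + 1)
    rw [add_right_comm] at hcover
    have hlt := ofReal_add_ofReal_lt (by norm_num) (hsmall (n + 2)) (hsmall (n + 1))
      (show 2 * (1 / 4 : ℝ) ≤ 1 / 2 by norm_num)
    exact (hmedian.trans (hcover.trans (add_le_add hmem hprev.1))).not_gt hlt

lemma lt_phat_of_hitsUpper {ω : Ω} (hU : ∀ {N : ℕ}, 1 ≤ N → α * N < Ub Pα X εs N)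
    (h : hitsUpper Pα X εs ω) : α < phat Pα X εs α ω := by
  obtain ⟨hτ, hS⟩ := h
  have hτpos : (0 : ℝ) < tau Pα X εs ω := by exact_mod_cast Nat.pos_of_ne_zero hτ
  rw [phat, if_neg hτ, lt_div_iff₀ hτpos]
  exact (hU (Nat.one_le_iff_ne_zero.2 hτ)).trans_le (by exact_mod_cast hS)

lemma phat_lt_of_hitsLower {ω : Ω} (hL : ∀ {N : ℕ}, 1 ≤ N → (Lb Pα X εs N : ℝ) < α * N)
    (h : hitsLower Pα X εs ω) : phat Pα X εs α ω < α := by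
  obtain ⟨hτ, hS⟩ := h
  have hτpos : (0 : ℝ) < tau Pα X εs ω := by exact_mod_cast Nat.pos_of_ne_zero hτ
  rw [phat, if_neg hτ, div_lt_iff₀ hτpos]
  exact (show (S X _ ω : ℝ) ≤ Lb Pα X εs _ by exact_mod_cast hS).trans_lt
    (hL (Nat.one_le_iff_ne_zero.2 hτ))

end Separation

theorem statement_13_general {Ω : Type*} [MeasurableSpace Ω]
    (α ε : ℝ) (hα : α ∈ Set.Ioo (0:ℝ) 1)
    (εs : ℕ → ℝ) (hmono : Monotone εs)
    (hlt : ∀ n, εs n < ε)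
    (P : ℝ → Measure Ω) (X : ℕ → Ω → ℕ)
    (hBern : ∀ p ∈ Set.Icc (0:ℝ) 1, IsBernoulliSeq (P p) p X)
    (hεq : ε ≤ 1 / 4) :
    ∀ ω : Ω, (hitsUpper (P α) X εs ω → α < phat (P α) X εs α ω) ∧
      (hitsLower (P α) X εs ω → phat (P α) X εs α ω < α) := by
  have hB := hBern α ⟨hα.1.le, hα.2.le⟩
  have hsmall : ∀ n, εs n < 1 / 4 := fun n => (hlt n).trans_le hεq
  exact fun ω => ⟨lt_phat_of_hitsUpper (mul_lt_Ub hB hα.1.le hα.2.le hmono hsmall),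
    phat_lt_of_hitsLower (Lb_lt_mul hB hα.1.le hα.2.le hmono hsmall)⟩

theorem statement_13 {Ω : Type*} [MeasurableSpace Ω]
    (α ε : ℝ) (hα : α ∈ Set.Ioo (0:ℝ) 1) (hε : ε ∈ Set.Ioo (0:ℝ) 1)
    (εs : ℕ → ℝ) (hεs0 : εs 0 = 0) (hmono : Monotone εs)
    (hnonneg : ∀ n, 0 ≤ εs n) (hlt : ∀ n, εs n < ε)
    (hlim : Filter.Tendsto εs Filter.atTop (nhds ε))
    (P : ℝ → Measure Ω) (X : ℕ → Ω → ℕ)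
    (hBern : ∀ p ∈ Set.Icc (0:ℝ) 1, IsBernoulliSeq (P p) p X)
    (hεq : ε ≤ 1 / 4) :
    ∀ ω : Ω, (hitsUpper (P α) X εs ω → α < phat (P α) X εs α ω) ∧
      (hitsLower (P α) X εs ω → phat (P α) X εs α ω < α) :=
  statement_13_general α ε hα εs hmono hlt P X hBern hεq

end SeqMC
end

section
/- For every n ∈ ℕ, the naive estimator p̂_naive = S_n/n has resampling risk at least one half in the worst case: sup over p ∈ [0,1] of RR_p(p̂_naive) ≥ 1/2. -/
open MeasureTheory ProbabilityTheory Filter Asymptotics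
open scoped ENNReal

/-! For `k = ⌊α n⌋₊` the event `{S_n/n ≤ α}` is `{S_n ≤ k}`, whose probability `F(p)` under
`P_p` is a polynomial in `p`. At `p = α` the risk is `1 - F(α)`, while for `p > α` it is `F(p)`,
which tends to `F(α)` as `p ↓ α`. Hence the supremum of the risk is at least
`max (1 - F(α)) F(α) ≥ 1/2`. -/

namespace SeqMC

variable {Ω : Type*}

/-- `P(Bin(n, p) ≤ k)`, expanded over the set of successful trials: this is the form in which
independence delivers it. -/
def binomialCDF (n k : ℕ) (p : ℝ) : ℝ :=
  ∑ T ∈ (Finset.range n).powerset with T.card ≤ k,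
    ∏ i ∈ Finset.range n, if i ∈ T then p else 1 - p

theorem continuous_binomialCDF (n k : ℕ) : Continuous (binomialCDF n k) :=
  continuous_finsetSum _ fun T _ => continuous_finsetProd _ fun i _ => by
    split_ifs <;> fun_prop

def successes (X : ℕ → Ω → ℕ) (n : ℕ) (ω : Ω) : Finset ℕ :=
  (Finset.range n).filter fun i => X i ω = 1

theorem card_successes {X : ℕ → Ω → ℕ} (hX : ∀ i ω, X i ω ≤ 1) (n : ℕ) (ω : Ω) :
    (successes X n ω).card = S X n ω := by
  rw [successes, Finset.card_filter, S]
  refine Finset.sum_congr rfl fun i _ => ?_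
  have := hX i ω
  split_ifs <;> omega

theorem setOf_successes_eq {X : ℕ → Ω → ℕ} (hX : ∀ i ω, X i ω ≤ 1) {n : ℕ} {T : Finset ℕ}
    (hT : T ⊆ Finset.range n) :
    {ω | successes X n ω = T} =
      ⋂ i ∈ Finset.range n, X i ⁻¹' {if i ∈ T then 1 else 0} := by
  ext ω
  simp only [Set.mem_ofPred_eq, Set.mem_iInter, Set.mem_preimage, Set.mem_singleton_iff,
    Finset.ext_iff, successes, Finset.mem_filter, Finset.mem_range]
  constructor
  · intro h i hi
    have := hX i ω
    by_cases hiT : i ∈ T <;> simp only [hiT, if_true, if_false] <;> grind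
  · intro h i
    by_cases hin : i < n
    · have := h i hin
      by_cases hiT : i ∈ T <;> simp_all
    · simpa [hin] using fun hiT => hin (Finset.mem_range.1 (hT hiT))

namespace IsBernoulliSeq

variable [MeasurableSpace Ω] {P : Measure Ω} {p : ℝ} {X : ℕ → Ω → ℕ}

theorem measure_preimage_zero_s15 (h : IsBernoulliSeq P p X) (hp : p ∈ Set.Icc (0:ℝ) 1) (i : ℕ) :
    P (X i ⁻¹' {0}) = ENNReal.ofReal (1 - p) := by
  have := h.isProb
  have hcompl : X i ⁻¹' {0} = (X i ⁻¹' {1})ᶜ := by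
    ext ω
    have := h.bdd i ω
    simp only [Set.mem_preimage, Set.mem_singleton_iff, Set.mem_compl_iff]
    omega
  rw [hcompl, prob_compl_eq_one_sub (h.meas i (measurableSet_singleton _)), h.bern i,
    ENNReal.ofReal_sub 1 hp.1, ENNReal.ofReal_one]

theorem measure_successes_eq (h : IsBernoulliSeq P p X) (hp : p ∈ Set.Icc (0:ℝ) 1) {n : ℕ}
    {T : Finset ℕ} (hT : T ⊆ Finset.range n) :
    P {ω | successes X n ω = T} =
      ENNReal.ofReal (∏ i ∈ Finset.range n, if i ∈ T then p else 1 - p) := by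
  rw [setOf_successes_eq h.bdd hT,
    h.indep.meas_biInter fun i _ => ⟨_, measurableSet_singleton _, rfl⟩,
    ENNReal.ofReal_prod_of_nonneg fun i _ => by split_ifs <;> linarith [hp.1, hp.2]]
  refine Finset.prod_congr rfl fun i _ => ?_
  split_ifs
  · exact h.bern i
  · exact h.measure_preimage_zero_s15 hp i

theorem measurable_S (h : IsBernoulliSeq P p X) (n : ℕ) : Measurable (S X n) :=
  Finset.measurable_sum _ fun i _ => h.meas i

theorem measure_S_le (h : IsBernoulliSeq P p X) (hp : p ∈ Set.Icc (0:ℝ) 1) (n k : ℕ) :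
    P {ω | S X n ω ≤ k} = ENNReal.ofReal (binomialCDF n k p) := by
  set 𝒯 := (Finset.range n).powerset.filter (·.card ≤ k)
  have hunion : {ω | S X n ω ≤ k} = ⋃ T ∈ 𝒯, {ω | successes X n ω = T} := by
    ext ω
    simp [𝒯, ← card_successes h.bdd, successes]
  have hdisj : Set.PairwiseDisjoint ↑𝒯 fun T => {ω | successes X n ω = T} :=
    (Set.pairwiseDisjoint_fiber (successes X n) _).subset (Set.subset_univ _)
  have hsub : ∀ T ∈ 𝒯, T ⊆ Finset.range n := fun T hT =>
    Finset.mem_powerset.1 (Finset.mem_filter.1 hT).1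
  have hmeas : ∀ T ∈ 𝒯, MeasurableSet {ω | successes X n ω = T} := fun T hT => by
    rw [setOf_successes_eq h.bdd (hsub T hT)]
    exact .biInter (Finset.countable_toSet _) fun i _ => h.meas i (measurableSet_singleton _)
  rw [hunion, measure_biUnion_finset hdisj hmeas, binomialCDF,
    ENNReal.ofReal_sum_of_nonneg fun T _ => Finset.prod_nonneg fun i _ => by
      split_ifs <;> linarith [hp.1, hp.2]]
  exact Finset.sum_congr rfl fun T hT => h.measure_successes_eq hp (hsub T hT)

end IsBernoulliSeq

theorem natCast_div_le_iff_le_floor {a : ℝ} (ha : 0 ≤ a) (m : ℕ) {n : ℕ} (hn : 0 < n) :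
    (m : ℝ) / n ≤ a ↔ m ≤ ⌊a * n⌋₊ := by
  rw [div_le_iff₀ (Nat.cast_pos.2 hn), Nat.le_floor_iff (by positivity)]

theorem statement_15 {Ω : Type*} [MeasurableSpace Ω]
    (α : ℝ) (hα : α ∈ Set.Ioo (0:ℝ) 1)
    (P : ℝ → Measure Ω) (X : ℕ → Ω → ℕ)
    (hBern : ∀ p ∈ Set.Icc (0:ℝ) 1, IsBernoulliSeq (P p) p X) :
    ∀ n : ℕ, 1 ≤ n →
      ENNReal.ofReal (1 / 2) ≤
        ⨆ p ∈ Set.Icc (0:ℝ) 1,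
          if p ≤ α then P p {ω | α < (S X n ω : ℝ) / n}
          else P p {ω | (S X n ω : ℝ) / n ≤ α} := by
  intro n hn
  set A := {ω | S X n ω ≤ ⌊α * n⌋₊}
  set R := ⨆ p ∈ Set.Icc (0:ℝ) 1,
    if p ≤ α then P p {ω | α < (S X n ω : ℝ) / n} else P p {ω | (S X n ω : ℝ) / n ≤ α}
  have hαI : α ∈ Set.Icc (0:ℝ) 1 := Set.Ioo_subset_Icc_self hα
  have hA : {ω | (S X n ω : ℝ) / n ≤ α} = A :=
    Set.ext fun ω => natCast_div_le_iff_le_floor hα.1.le _ hn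
  have hrisk_α : 1 - P α A ≤ R := by
    have := (hBern α hαI).isProb
    refine le_iSup₂_of_le α hαI (le_of_eq ?_)
    have hAmeas : MeasurableSet A := (hBern α hαI).measurable_S n measurableSet_Iic
    rw [if_pos le_rfl, ← prob_compl_eq_one_sub hAmeas, ← hA, Set.compl_ofPred]
    simp only [not_le]
  have hrisk_right : P α A ≤ R := by
    rw [(hBern α hαI).measure_S_le hαI]
    refine le_of_tendsto ((ENNReal.continuous_ofReal.comp
      (continuous_binomialCDF _ _)).continuousAt.tendsto.mono_left
        (nhdsWithin_le_nhds (s := Set.Ioi α))) ?_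
    filter_upwards [Ioo_mem_nhdsGT hα.2] with p hp
    have hpI : p ∈ Set.Icc (0:ℝ) 1 := ⟨hα.1.le.trans hp.1.le, hp.2.le⟩
    refine le_iSup₂_of_le p hpI (le_of_eq ?_)
    rw [if_neg (not_le.2 hp.1), hA, (hBern p hpI).measure_S_le hpI]
    rfl
  rw [one_div, ENNReal.ofReal_inv_of_pos two_pos, ENNReal.ofReal_ofNat]
  rcases le_total (P α A) 2⁻¹ with h | h
  · exact (ENNReal.one_sub_inv_two ▸ tsub_le_tsub_left h 1).trans hrisk_α
  · exact h.trans hrisk_right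

end SeqMC
end
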